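/- arXiv:1406.2974 — 6 statements merged into one kernel-verified Lean document; each statement's English description precedes it below -/
import Mathlib

section
/- Define the class E* of totally disconnected locally compact (t.d.l.c.) Hausdorff groups as the smallest class containing all profinite groups and all discrete groups, closed under extensions by profinite or discrete quotients (if N ⊴ G is closed with N ∈ E* and G/N profinite or discrete then G ∈ E*), and closed under directed unions of open subgroups. Then for every G ∈ E*, every open subgroup O of G also belongs to E*. -/
/-!
Strengthen the claim: a topological group `H` with an open topological embedding
homomorphism `H →* G` into a group `G ∈ E*` lies in `E*`. Open embeddings restrict to preimages
of subgroups and descend to quotients by preimages of normal subgroups, and an open subgroup of a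
profinite group is closed, hence profinite; so the strengthened claim follows by induction on
`E*`. Allowing arbitrary embeddings rather than inclusions of open subgroups is what lets the
induction pass through the subgroups `N` and `O i` of the defining constructors.
-/

universe u

/-- A profinite group: compact, totally disconnected and Hausdorff. -/
def IsProfiniteGrp (G : Type u) [TopologicalSpace G] : Prop :=
  CompactSpace G ∧ TotallyDisconnectedSpace G ∧ T2Space G

/-- A topological group is compactly generated if it is generated by a compact subset. -/
def CompactlyGeneratedGrp (G : Type u) [Group G] [TopologicalSpace G] : Prop :=
  ∃ K : Set G, IsCompact K ∧ Subgroup.closure K = ⊤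

/-- The class `E*`: the smallest class of t.d.l.c. groups containing profinite and discrete
groups, closed under extensions with profinite or discrete quotient, and closed under
directed unions of open subgroups. -/
inductive IsEStar : ∀ (G : Type u) [Group G] [TopologicalSpace G], Prop
  | profinite (G : Type u) [Group G] [TopologicalSpace G] [IsTopologicalGroup G]
      (h : IsProfiniteGrp G) : IsEStar G
  | discrete (G : Type u) [Group G] [TopologicalSpace G] [IsTopologicalGroup G]
      [DiscreteTopology G] : IsEStar G
  | extension (G : Type u) [Group G] [TopologicalSpace G] [IsTopologicalGroup G]
      (N : Subgroup G) [N.Normal] (hN : IsClosed (N : Set G))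
      (hNE : IsEStar N)
      (hQ : IsProfiniteGrp (G ⧸ N) ∨ DiscreteTopology (G ⧸ N)) : IsEStar G
  | directedUnion (G : Type u) [Group G] [TopologicalSpace G] [IsTopologicalGroup G]
      {ι : Type u} (O : ι → Subgroup G)
      (hdir : Directed (· ≤ ·) O)
      (hopen : ∀ i, IsOpen (O i : Set G))
      (hmem : ∀ i, IsEStar (O i))
      (hcover : ∀ g : G, ∃ i, g ∈ O i) : IsEStar G


open Topology

theorem IsProfiniteGrp.of_isOpenEmbedding {H G : Type u} [Group H] [TopologicalSpace H]
    [Group G] [TopologicalSpace G] [SeparatelyContinuousMul G] (hG : IsProfiniteGrp G)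
    (f : H →* G) (hf : IsOpenEmbedding f) : IsProfiniteGrp H := by
  obtain ⟨_, _, _⟩ := hG
  have hrange : IsClosed (Set.range f) := f.range.isClosed_of_isOpen hf.isOpen_range
  exact ⟨(IsClosedEmbedding.mk hf.isEmbedding hrange).compactSpace,
    hf.isEmbedding.isTotallyDisconnected_range.1
      (isTotallyDisconnected_of_totallyDisconnectedSpace _),
    hf.isEmbedding.t2Space⟩

theorem MonoidHom.isOpenEmbedding_subgroupComap {H G : Type*} [Group H] [TopologicalSpace H]
    [Group G] [TopologicalSpace G] {f : H →* G} (hf : IsOpenEmbedding f) (K : Subgroup G) :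
    IsOpenEmbedding (f.subgroupComap K) :=
  hf.restrictPreimage (K : Set G)

theorem QuotientGroup.isOpenEmbedding_map_comap {H G : Type*} [Group H] [TopologicalSpace H]
    [SeparatelyContinuousMul H] [Group G] [TopologicalSpace G] [SeparatelyContinuousMul G]
    {f : H →* G} (hf : Continuous f) (hf' : IsOpenMap f) (N : Subgroup G) [N.Normal] :
    IsOpenEmbedding (QuotientGroup.map (N.comap f) N f le_rfl) := by
  set φ := QuotientGroup.map (N.comap f) N f le_rfl
  have hφmk : ⇑φ ∘ QuotientGroup.mk = QuotientGroup.mk ∘ f := rfl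
  have hcont : Continuous φ := by
    rw [← QuotientGroup.isOpenQuotientMap_mk.continuous_comp_iff, hφmk]
    exact QuotientGroup.continuous_mk.comp hf
  have hopen : IsOpenMap φ := by
    rw [QuotientGroup.isOpenQuotientMap_mk.isOpenMap_iff, hφmk]
    exact QuotientGroup.isOpenMap_coe.comp hf'
  have hinj : Function.Injective φ := by
    refine (injective_iff_map_eq_one φ).2 fun x hx => ?_
    induction x using QuotientGroup.induction_on with
    | H x => exact (QuotientGroup.eq_one_iff x).2 ((QuotientGroup.eq_one_iff (f x)).1 hx)
  exact .of_continuous_injective_isOpenMap hcont hinj hopen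

theorem IsEStar.of_isOpenEmbedding {G : Type u} [Group G] [TopologicalSpace G]
    (hG : IsEStar G) {H : Type u} [Group H] [TopologicalSpace H] [IsTopologicalGroup H]
    (f : H →* G) (hf : IsOpenEmbedding f) : IsEStar H := by
  induction hG generalizing H with
  | profinite G hG => exact .profinite H (hG.of_isOpenEmbedding f hf)
  | discrete G =>
    have := hf.isEmbedding.discreteTopology
    exact .discrete H
  | extension G N hN _ hQ ih =>
    refine .extension H (N.comap f) (hN.preimage hf.continuous)
      (ih (f.subgroupComap N) (f.isOpenEmbedding_subgroupComap hf N)) ?_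
    have hφ := QuotientGroup.isOpenEmbedding_map_comap hf.continuous hf.isOpenMap N
    rcases hQ with hQ | hQ
    · exact .inl (hQ.of_isOpenEmbedding _ hφ)
    · exact .inr hφ.isEmbedding.discreteTopology
  | directedUnion G O hdir hopen _ hcover ih =>
    exact .directedUnion H (fun i => (O i).comap f)
      (hdir.mono_comp (· ≤ ·) fun _ _ => Subgroup.comap_mono)
      (fun i => (hopen i).preimage hf.continuous)
      (fun i => ih i (f.subgroupComap (O i)) (f.isOpenEmbedding_subgroupComap hf (O i)))
      (fun h => hcover (f h))

theorem IsEStar.of_openSubgroup_general (G : Type u) [Group G] [TopologicalSpace G]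
    [IsTopologicalGroup G] (hG : IsEStar G) (O : Subgroup G) (hO : IsOpen (O : Set G)) :
    IsEStar O :=
  hG.of_isOpenEmbedding O.subtype hO.isOpenEmbedding_subtypeVal

/-- Every open subgroup of a group in `E*` belongs to `E*`. -/
theorem IsEStar.of_openSubgroup (G : Type u) [Group G] [TopologicalSpace G]
    [IsTopologicalGroup G] [LocallyCompactSpace G] [TotallyDisconnectedSpace G] [T2Space G]
    (hG : IsEStar G) (O : Subgroup G) (hO : IsOpen (O : Set G)) :
    IsEStar O :=
  IsEStar.of_openSubgroup_general G hG O hO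
end

section
/- Let G ∈ E* be compactly generated with non-zero construction rank rk(G) = β + 1. Then the rank is witnessed by a group extension: there exists a closed normal subgroup H ⊴ G with rk(H) ≤ β and G/H profinite or discrete. -/
/-! If `G` enters `E*_{β+1}` as an extension, that extension witnesses the rank. If it enters as
a directed union of open subgroups, a compact generating set is covered by finitely many
members, hence by a single one, which is then all of `G`; so `G ⊴ G` with trivial quotient is
the witness. Otherwise `G` already lies in `E*_β`, contradicting the minimality of the rank. -/

universe u

/-- The cumulative hierarchy `E*_α` defining the construction rank:
`E*_0` consists of profinite and discrete groups; `E*` is cumulative (monotone in `α`,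
which encodes the unions at limit stages); and `G ∈ E*_{α+1}` if `G` is an extension of a
group in `E*_α` with profinite or discrete quotient, or a directed union of open subgroups
lying in `E*_α`. -/
inductive EStarAt : Ordinal.{u} → ∀ (G : Type u) [Group G] [TopologicalSpace G], Prop
  | base (G : Type u) [Group G] [TopologicalSpace G] [IsTopologicalGroup G]
      (h : IsProfiniteGrp G ∨ DiscreteTopology G) : EStarAt 0 G
  | extension (α : Ordinal.{u}) (G : Type u) [Group G] [TopologicalSpace G] [IsTopologicalGroup G]
      (N : Subgroup G) [N.Normal] (hN : IsClosed (N : Set G))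
      (hNE : EStarAt α N)
      (hQ : IsProfiniteGrp (G ⧸ N) ∨ DiscreteTopology (G ⧸ N)) : EStarAt (α + 1) G
  | directedUnion (α : Ordinal.{u}) (G : Type u) [Group G] [TopologicalSpace G]
      [IsTopologicalGroup G] {ι : Type u} (O : ι → Subgroup G)
      (hdir : Directed (· ≤ ·) O)
      (hopen : ∀ i, IsOpen (O i : Set G))
      (hmem : ∀ i, EStarAt α (O i))
      (hcover : ∀ g : G, ∃ i, g ∈ O i) : EStarAt (α + 1) G
  | mono {α β : Ordinal.{u}} (h : α ≤ β) (G : Type u) [Group G] [TopologicalSpace G]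
      (hG : EStarAt α G) : EStarAt β G

/-- The construction rank: the least `α` with `G ∈ E*_α`. -/
noncomputable def eStarRank (G : Type u) [Group G] [TopologicalSpace G] : Ordinal.{u} :=
  sInf {α | EStarAt α G}

lemma isProfiniteGrp_of_subsingleton {X : Type u} [TopologicalSpace X] [Subsingleton X] :
    IsProfiniteGrp X :=
  ⟨inferInstance, inferInstance, inferInstance⟩

section

variable {G : Type u} [Group G] [TopologicalSpace G]

lemma eStarRank_le_of_eStarAt {α : Ordinal.{u}} (h : EStarAt α G) : eStarRank G ≤ α :=
  csInf_le' h

lemma eStarAt_eStarRank_of_ne_zero (h : eStarRank G ≠ 0) : EStarAt (eStarRank G) G := by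
  refine csInf_mem (s := {α | EStarAt α G}) (Set.nonempty_iff_ne_empty.2 fun hempty => h ?_)
  rw [eStarRank, hempty, Ordinal.sInf_empty]

lemma CompactlyGeneratedGrp.exists_eq_top_of_directed (hcg : CompactlyGeneratedGrp G)
    {ι : Type*} (O : ι → Subgroup G) (hdir : Directed (· ≤ ·) O)
    (hopen : ∀ i, IsOpen (O i : Set G)) (hcover : ∀ g : G, ∃ i, g ∈ O i) : ∃ i, O i = ⊤ := by
  obtain ⟨K, hK, hKgen⟩ := hcg
  have : Nonempty ι := ⟨(hcover 1).choose⟩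
  obtain ⟨t, ht⟩ := hK.elim_finite_subcover (fun i => (O i : Set G)) hopen
    fun x _ => Set.mem_iUnion.2 (hcover x)
  obtain ⟨i, hi⟩ := hdir.finset_le t
  have hKi : K ⊆ O i := fun x hx => by
    obtain ⟨j, hj, hxj⟩ := Set.mem_iUnion₂.1 (ht hx)
    exact hi j hj hxj
  exact ⟨i, top_le_iff.1 (hKgen ▸ (Subgroup.closure_le (O i)).2 hKi)⟩

end

lemma EStarAt.succ_cases {G : Type u} [Group G] [TopologicalSpace G]
    (hcg : CompactlyGeneratedGrp G) {β : Ordinal.{u}} (h : EStarAt (β + 1) G) :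
    EStarAt β G ∨ ∃ (H : Subgroup G) (_ : H.Normal), IsClosed (H : Set G) ∧ EStarAt β H ∧
      (IsProfiniteGrp (G ⧸ H) ∨ DiscreteTopology (G ⧸ H)) := by
  generalize hγ : β + 1 = γ at h
  induction h generalizing β with
  | base G _ => exact absurd hγ (add_pos_of_right zero_lt_one β).ne'
  | extension α G N hN hNE hQ =>
    obtain rfl := Order.add_one_inj.1 hγ
    exact Or.inr ⟨N, inferInstance, hN, hNE, hQ⟩
  | directedUnion α G O hdir hopen hmem hcover =>
    obtain rfl := Order.add_one_inj.1 hγ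
    obtain ⟨i, hi⟩ := hcg.exists_eq_top_of_directed O hdir hopen hcover
    have := QuotientGroup.subsingleton_quotient_top (G := G)
    exact Or.inr ⟨O i, hi ▸ inferInstance, hi ▸ isClosed_univ, hmem i,
      Or.inl (hi ▸ isProfiniteGrp_of_subsingleton)⟩
  | mono hle G hG ih =>
    subst hγ
    rcases hle.lt_or_eq with hlt | rfl
    · exact Or.inl (.mono (Order.lt_add_one_iff.1 hlt) G hG)
    · exact ih hcg rfl

theorem eStarRank_witnessed_by_extension_general (G : Type u) [Group G] [TopologicalSpace G]
    (hcg : CompactlyGeneratedGrp G) (β : Ordinal.{u})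
    (hrk : eStarRank G = β + 1) :
    ∃ (H : Subgroup G) (_ : H.Normal), IsClosed (H : Set G) ∧ eStarRank H ≤ β ∧
      (IsProfiniteGrp (G ⧸ H) ∨ DiscreteTopology (G ⧸ H)) := by
  have hG : EStarAt (β + 1) G :=
    hrk ▸ eStarAt_eStarRank_of_ne_zero (hrk ▸ (add_pos_of_right zero_lt_one β).ne')
  rcases hG.succ_cases hcg with hβ | ⟨H, hH, hclosed, hHβ, hquot⟩
  · have hle : β + 1 ≤ β := hrk ▸ eStarRank_le_of_eStarAt hβ
    exact absurd hle (Order.lt_add_one_iff.2 le_rfl).not_ge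
  · exact ⟨H, hH, hclosed, eStarRank_le_of_eStarAt hHβ, hquot⟩

/-- If `G ∈ E*` is compactly generated with construction rank `β + 1`, then the rank is
witnessed by a group extension: there is a closed normal `H ⊴ G` with `rk(H) ≤ β` and
`G/H` profinite or discrete. -/
theorem eStarRank_witnessed_by_extension (G : Type u) [Group G] [TopologicalSpace G]
    [IsTopologicalGroup G] [LocallyCompactSpace G] [TotallyDisconnectedSpace G] [T2Space G]
    (hcg : CompactlyGeneratedGrp G) (β : Ordinal.{u})
    (hG : ∃ α : Ordinal.{u}, EStarAt α G) (hrk : eStarRank G = β + 1) :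
    ∃ (H : Subgroup G) (_ : H.Normal), IsClosed (H : Set G) ∧ eStarRank H ≤ β ∧
      (IsProfiniteGrp (G ⧸ H) ∨ DiscreteTopology (G ⧸ H)) :=
  eStarRank_witnessed_by_extension_general G hcg β hrk
end

section
/- The class E* is closed under group extension: if G is a totally disconnected locally compact Hausdorff group with a closed normal subgroup H such that H ∈ E* and G/H ∈ E*, then G ∈ E*. -/
universe u

/-!
Induct on the derivation of `G ⧸ H ∈ E*`, replacing the quotient map by an arbitrary open
quotient map `ψ : G → Q` with closed kernel in `E*`. If `Q` is profinite or discrete, then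
`G ⧸ ker ψ ≅ Q` and `G` is an extension by `ker ψ`. If `Q` has a closed normal `N ∈ E*` with
profinite or discrete `Q ⧸ N`, the restriction `ψ⁻¹(N) → N` has kernel `ker ψ`, so `ψ⁻¹(N) ∈ E*`
by induction, and `G` is an extension of `ψ⁻¹(N)` with quotient `Q ⧸ N`. If `Q` is a directed
union of open `Oᵢ ∈ E*`, then `G` is the directed union of the open `ψ⁻¹(Oᵢ) ∈ E*`. As `E*` is a
predicate on types, identifying the kernel of `ψ⁻¹(N) → N` with `ker ψ` needs invariance of `E*`
under isomorphisms of topological groups.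
-/

open Topology

theorem MonoidHom.ker_subgroupComap {A B : Type*} [Group A] [Group B] (ψ : A →* B)
    (K : Subgroup B) : (ψ.subgroupComap K).ker = ψ.ker.subgroupOf (K.comap ψ) := by
  ext
  simp only [MonoidHom.mem_ker, Subgroup.mem_subgroupOf]
  exact Subtype.ext_iff

theorem Homeomorph.isProfiniteGrp {X Y : Type u} [TopologicalSpace X] [TopologicalSpace Y]
    (e : X ≃ₜ Y) (hX : IsProfiniteGrp X) : IsProfiniteGrp Y := by
  obtain ⟨_, _, _⟩ := hX
  exact ⟨e.compactSpace, e.totallyDisconnectedSpace, e.t2Space⟩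

section

variable {A B : Type u} [Group A] [TopologicalSpace A] [Group B] [TopologicalSpace B]

def ContinuousMulEquiv.subgroupMap (e : A ≃ₜ* B) (K : Subgroup A) :
    K ≃ₜ* K.map (e : A →* B) where
  toMulEquiv := (e : A ≃* B).subgroupMap K
  continuous_toFun := (e.continuous.comp continuous_subtype_val).subtype_mk _
  continuous_invFun := (e.symm.continuous.comp continuous_subtype_val).subtype_mk _

variable [IsTopologicalGroup A]

noncomputable def MonoidHom.quotientKerHomeomorph (ψ : A →* B) (hψ : IsOpenQuotientMap ψ) :
    A ⧸ ψ.ker ≃ₜ B :=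
  (QuotientGroup.quotientKerEquivOfSurjective ψ hψ.surjective).toEquiv.toHomeomorphOfContinuousOpen
    (QuotientGroup.isOpenQuotientMap_mk.continuous_comp_iff.1 hψ.continuous)
    (QuotientGroup.isOpenQuotientMap_mk.isOpenMap_iff.2 hψ.isOpenMap)

theorem IsEStar.extension_of_isOpenQuotientMap (ψ : A →* B) (hψ : IsOpenQuotientMap ψ)
    (hker : IsClosed (ψ.ker : Set A)) (hkerE : IsEStar ψ.ker)
    (hB : IsProfiniteGrp B ∨ DiscreteTopology B) : IsEStar A :=
  .extension A ψ.ker hker hkerE <| hB.imp (ψ.quotientKerHomeomorph hψ).symm.isProfiniteGrp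
    (ψ.quotientKerHomeomorph hψ).discreteTopology_iff.2

end

theorem IsEStar.of_continuousMulEquiv {A : Type u} [Group A] [TopologicalSpace A]
    (hA : IsEStar A) {B : Type u} [Group B] [TopologicalSpace B] [IsTopologicalGroup B]
    (e : A ≃ₜ* B) : IsEStar B := by
  induction hA generalizing B with
  | profinite A hA => exact .profinite B (e.toHomeomorph.isProfiniteGrp hA)
  | discrete A =>
    have := e.toHomeomorph.discreteTopology
    exact .discrete B
  | extension A N hN _ hQ ih =>
    let ψ := (QuotientGroup.mk' N).comp (e.symm : B →* A)
    have hker : ψ.ker = N.map (e : A →* B) := by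
      rw [← MonoidHom.comap_ker, QuotientGroup.ker_mk']
      exact (Subgroup.map_equiv_eq_comap_symm (e : A ≃* B) N).symm
    refine .extension_of_isOpenQuotientMap ψ
      (QuotientGroup.isOpenQuotientMap_mk.comp e.symm.toHomeomorph.isOpenQuotientMap) ?_ ?_ hQ
      <;> rw [hker]
    · exact e.toHomeomorph.isClosedMap _ hN
    · exact ih (e.subgroupMap N)
  | directedUnion A O hdir hopen _ hcover ih =>
    refine .directedUnion B (fun i ↦ (O i).map (e : A →* B))
      (hdir.mono_comp _ (g := Subgroup.map (e : A →* B)) fun _ _ ↦ Subgroup.map_mono)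
      (fun i ↦ e.toHomeomorph.isOpenMap _ (hopen i)) (fun i ↦ ih i (e.subgroupMap (O i)))
      fun b ↦ ?_
    obtain ⟨i, hi⟩ := hcover (e.symm b)
    exact ⟨i, e.symm b, hi, e.apply_symm_apply b⟩

def ExtensionsInEStar (Q : Type u) [Group Q] [TopologicalSpace Q] : Prop :=
  ∀ (G : Type u) [Group G] [TopologicalSpace G] [IsTopologicalGroup G] (ψ : G →* Q),
    IsOpenQuotientMap ψ → IsClosed (ψ.ker : Set G) → IsEStar ψ.ker → IsEStar G

theorem IsEStar.comap_of_extensionsInEStar {A B : Type u} [Group A] [TopologicalSpace A]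
    [IsTopologicalGroup A] [Group B] [TopologicalSpace B] (ψ : A →* B)
    (hψ : IsOpenQuotientMap ψ) (hker : IsClosed (ψ.ker : Set A)) (hkerE : IsEStar ψ.ker)
    {K : Subgroup B} (hK : ExtensionsInEStar K) : IsEStar (K.comap ψ) := by
  refine hK _ (ψ.subgroupComap K) (hψ.restrictPreimage K) ?_ ?_ <;> rw [ψ.ker_subgroupComap K]
  · exact hker.preimage continuous_subtype_val
  · exact hkerE.of_continuousMulEquiv
      (Subgroup.subgroupOfContinuousMulEquivOfLe (ψ.ker_le_comap K)).symm

theorem IsEStar.extensionsInEStar {Q : Type u} [Group Q] [TopologicalSpace Q] (hQ : IsEStar Q) :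
    ExtensionsInEStar Q := by
  induction hQ with
  | profinite Q hQ =>
    exact fun G _ _ _ ψ hψ hker hkerE ↦ .extension_of_isOpenQuotientMap ψ hψ hker hkerE (.inl hQ)
  | discrete Q =>
    exact fun G _ _ _ ψ hψ hker hkerE ↦ .extension_of_isOpenQuotientMap ψ hψ hker hkerE (.inr ‹_›)
  | extension Q N hN _ hQN ih =>
    intro G _ _ _ ψ hψ hker hkerE
    have hM : IsEStar (N.comap ψ) := comap_of_extensionsInEStar ψ hψ hker hkerE ih
    refine .extension_of_isOpenQuotientMap ((QuotientGroup.mk' N).comp ψ)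
      (QuotientGroup.isOpenQuotientMap_mk.comp hψ) ?_ ?_ hQN <;>
      rw [← MonoidHom.comap_ker, QuotientGroup.ker_mk']
    · exact hN.preimage hψ.continuous
    · exact hM
  | directedUnion Q O hdir hopen _ hcover ih =>
    intro G _ _ _ ψ hψ hker hkerE
    exact .directedUnion G (fun i ↦ (O i).comap ψ)
      (hdir.mono_comp _ (g := Subgroup.comap ψ) fun _ _ ↦ Subgroup.comap_mono)
      (fun i ↦ (hopen i).preimage hψ.continuous)
      (fun i ↦ comap_of_extensionsInEStar ψ hψ hker hkerE (ih i)) fun g ↦ hcover (ψ g)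

theorem IsEStar.of_extension_general (G : Type u) [Group G] [TopologicalSpace G]
    [IsTopologicalGroup G]
    (H : Subgroup G) [H.Normal] (hH : IsClosed (H : Set G))
    (hHE : IsEStar H) (hQ : IsEStar (G ⧸ H)) :
    IsEStar G :=
  hQ.extensionsInEStar G (QuotientGroup.mk' H) QuotientGroup.isOpenQuotientMap_mk
    (by rwa [QuotientGroup.ker_mk']) (by rwa [QuotientGroup.ker_mk'])

/-- `E*` is closed under group extension. -/
theorem IsEStar.of_extension (G : Type u) [Group G] [TopologicalSpace G]
    [IsTopologicalGroup G] [LocallyCompactSpace G] [TotallyDisconnectedSpace G] [T2Space G]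
    (H : Subgroup G) [H.Normal] (hH : IsClosed (H : Set G))
    (hHE : IsEStar H) (hQ : IsEStar (G ⧸ H)) :
    IsEStar G :=
  IsEStar.of_extension_general G H hH hHE hQ
end

section
/- The class E* is closed under continuous injective preimages: if G ∈ E*, H is a totally disconnected locally compact Hausdorff group, and ψ : H → G is a continuous injective group homomorphism, then H ∈ E*. In particular, E* is closed under taking closed subgroups. -/
universe u

/-!
Induct on `E*`, carrying the stronger property `IsEStarHereditary`: in an extension, the preimage
of the normal subgroup only injects into it. Discrete groups, extensions with discrete quotient
and directed unions of open subgroups pull back directly. The profinite cases reduce to a t.d.l.c.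
group `H` with a continuous homomorphism `φ` to a profinite group whose kernel is hereditarily in
`E*`. Exhausting `H` by compactly generated open subgroups, compactness of the target gives a
compact open subgroup `B` for which `B ⊔ ker φ` is normal (the SIN property of `H ⧸ ker φ`). Then
`B ⊔ ker φ` is an extension of `ker φ` by a profinite group, and `H` is an extension of it by a
discrete group.
-/
open Set Pointwise

/-- Every t.d.l.c. group admitting a continuous injective homomorphism into `G` lies in `E*`. -/
def IsEStarHereditary (G : Type u) [Group G] [TopologicalSpace G] : Prop :=
  ∀ (L : Type u) [Group L] [TopologicalSpace L] [IsTopologicalGroup L] [LocallyCompactSpace L]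
    [TotallyDisconnectedSpace L] [T2Space L] (ρ : L →* G), Continuous ρ → Function.Injective ρ →
    IsEStar L

namespace IsEStarHereditary

variable {G H : Type u} [Group G] [TopologicalSpace G] [Group H] [TopologicalSpace H]

theorem of_continuous_injective (hG : IsEStarHereditary G) (f : H →* G) (hf : Continuous f)
    (hinj : Function.Injective f) : IsEStarHereditary H :=
  fun L _ _ _ _ _ _ ρ hρ hρinj => hG L (f.comp ρ) (hf.comp hρ) (hinj.comp hρinj)

theorem comap {N : Subgroup G} (hN : IsEStarHereditary N) (ψ : H →* G) (hψ : Continuous ψ)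
    (hinj : Function.Injective ψ) : IsEStarHereditary (N.comap ψ) :=
  hN.of_continuous_injective (ψ.subgroupComap N) ((hψ.comp continuous_subtype_val).subtype_mk _)
    fun _ _ h => Subtype.val_injective (hinj (congrArg Subtype.val h))

theorem ker_comp {K : Type u} [Group K] {φ : G →* K} (hφ : IsEStarHereditary φ.ker) (f : H →* G)
    (hf : Continuous f) (hinj : Function.Injective f) : IsEStarHereditary (φ.comp f).ker :=
  MonoidHom.comap_ker φ f ▸ hφ.comap f hf hinj

theorem of_subsingleton [Subsingleton G] : IsEStarHereditary G :=
  fun L _ _ _ _ _ _ _ _ hinj =>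
    haveI : Subsingleton L := hinj.subsingleton
    IsEStar.discrete L

theorem isEStar (hG : IsEStarHereditary G) [IsTopologicalGroup G] [LocallyCompactSpace G]
    [TotallyDisconnectedSpace G] [T2Space G] : IsEStar G :=
  hG G (MonoidHom.id G) continuous_id Function.injective_id

end IsEStarHereditary

theorem IsEStar.of_isOpen_normal {G : Type u} [Group G] [TopologicalSpace G]
    [IsTopologicalGroup G] (N : Subgroup G) [N.Normal] (hN : IsOpen (N : Set G))
    (hNE : IsEStar N) : IsEStar G :=
  IsEStar.extension G N (N.isClosed_of_isOpen hN) hNE (Or.inr (QuotientGroup.discreteTopology hN))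

theorem exists_isCompact_isOpen_one_mem (H : Type*) [TopologicalSpace H] [One H]
    [LocallyCompactSpace H] [TotallyDisconnectedSpace H] [T2Space H] :
    ∃ W : Set H, IsCompact W ∧ IsOpen W ∧ (1 : H) ∈ W := by
  obtain ⟨C, hC, hCnhds⟩ := exists_compact_mem_nhds (1 : H)
  obtain ⟨W, hW, h1W, hWC⟩ :=
    loc_compact_Haus_tot_disc_of_zero_dim.mem_nhds_iff.mp (interior_mem_nhds.mpr hCnhds)
  exact ⟨W, hC.of_isClosed_subset hW.isClosed (hWC.trans interior_subset), hW.isOpen, h1W⟩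

theorem exists_isOpen_subgroup_subset {G : Type*} [Group G] [TopologicalSpace G]
    [IsTopologicalGroup G] {W : Set G} (hWc : IsCompact W) (hWo : IsOpen W) (h1W : (1 : G) ∈ W) :
    ∃ U : Subgroup G, IsOpen (U : Set G) ∧ (U : Set G) ⊆ W := by
  obtain ⟨V, hV, hWV⟩ := compact_open_separated_mul_right hWc hWo subset_rfl
  have hstable : ∀ x ∈ Subgroup.closure (V ∩ V⁻¹), ∀ w ∈ W, w * x ∈ W := by
    intro x hx
    induction hx using Subgroup.closure_induction'' with
    | mem x hx => exact fun w hw => hWV (mul_mem_mul hw hx.1)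
    | inv_mem x hx => exact fun w hw => hWV (mul_mem_mul hw hx.2)
    | one => simp
    | mul x y _ _ hx hy => exact fun w hw => mul_assoc w x y ▸ hy _ (hx w hw)
  refine ⟨Subgroup.closure (V ∩ V⁻¹), Subgroup.isOpen_of_mem_nhds _ (g := 1) ?_, fun x hx => ?_⟩
  · exact Filter.mem_of_superset (Filter.inter_mem hV (inv_mem_nhds_one G hV))
      Subgroup.subset_closure
  · simpa using hstable x hx 1 h1W

/-- van Dantzig's theorem. -/
theorem exists_isCompact_isOpen_subgroup (H : Type*) [Group H] [TopologicalSpace H]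
    [IsTopologicalGroup H] [LocallyCompactSpace H] [TotallyDisconnectedSpace H] [T2Space H] :
    ∃ U : Subgroup H, IsCompact (U : Set H) ∧ IsOpen (U : Set H) := by
  obtain ⟨W, hWc, hWo, h1W⟩ := exists_isCompact_isOpen_one_mem H
  obtain ⟨U, hUo, hUW⟩ := exists_isOpen_subgroup_subset hWc hWo h1W
  exact ⟨U, hWc.of_isClosed_subset (U.isClosed_of_isOpen hUo) hUW, hUo⟩

theorem Subgroup.compactlyGeneratedGrp_closure {G : Type*} [Group G] [TopologicalSpace G]
    {C : Set G} (hC : IsCompact C) (hcl : IsClosed (Subgroup.closure C : Set G)) :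
    CompactlyGeneratedGrp (Subgroup.closure C) :=
  ⟨_, hcl.isClosedEmbedding_subtypeVal.isCompact_preimage hC, Subgroup.closure_preimage_eq_top C⟩

/-- `H` is the directed union of the subgroups generated by a compact open subgroup and a finite
set. -/
theorem IsEStar.of_forall_compactlyGeneratedGrp (H : Type u) [Group H] [TopologicalSpace H]
    [IsTopologicalGroup H] [LocallyCompactSpace H] [TotallyDisconnectedSpace H] [T2Space H]
    (h : ∀ O : Subgroup H, IsOpen (O : Set H) → CompactlyGeneratedGrp O → IsEStar O) :
    IsEStar H := by
  classical
  obtain ⟨U, hUc, hUo⟩ := exists_isCompact_isOpen_subgroup H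
  let O : Finset H → Subgroup H := fun F => Subgroup.closure ((U : Set H) ∪ F)
  have hOopen (F : Finset H) : IsOpen (O F : Set H) :=
    Subgroup.isOpen_mono (fun _ hx => Subgroup.subset_closure (Or.inl hx)) hUo
  refine IsEStar.directedUnion H O ?_ hOopen (fun F => h _ (hOopen F) ?_) fun g => ?_
  · intro F₁ F₂
    refine ⟨F₁ ∪ F₂, Subgroup.closure_mono ?_, Subgroup.closure_mono ?_⟩ <;>
      exact union_subset_union_right _ (by simp)
  · exact Subgroup.compactlyGeneratedGrp_closure (hUc.union F.finite_toSet.isCompact)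
      (Subgroup.isClosed_of_isOpen _ (hOopen F))
  · exact ⟨{g}, Subgroup.subset_closure (Or.inr (by simp))⟩

theorem Subgroup.normal_of_conj_mem {G : Type*} [Group G] {S : Set G}
    (hS : Subgroup.closure S = ⊤) {P : Subgroup G}
    (hconj : ∀ s ∈ S ∪ S⁻¹, ∀ x ∈ P, s * x * s⁻¹ ∈ P) : P.Normal := by
  rw [← Subgroup.normalizer_eq_top_iff, eq_top_iff, ← hS, Subgroup.closure_le]
  refine fun s hs => Subgroup.mem_normalizer_iff.mpr fun x => ⟨hconj s (Or.inl hs) x, fun h => ?_⟩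
  simpa [mul_assoc] using hconj s⁻¹ (Or.inr (by simpa using hs)) _ h

theorem exists_openNormalSubgroup_inter_preimage_subset {H K : Type*} [TopologicalSpace H]
    [Group K] [TopologicalSpace K] [IsTopologicalGroup K] [CompactSpace K]
    [TotallyDisconnectedSpace K] [T2Space K] {f : H → K} (hf : Continuous f) {T W : Set H}
    (hT : IsCompact T) (hW : IsOpen W) (hTW : T ∩ f ⁻¹' {1} ⊆ W) :
    ∃ V : Subgroup K, IsOpen (V : Set K) ∧ V.Normal ∧ T ∩ f ⁻¹' V ⊆ W := by
  have hC : IsCompact (f '' (T \ W)) := (hT.diff hW).image hf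
  have h1C : (1 : K) ∉ f '' (T \ W) := fun ⟨x, ⟨hxT, hxW⟩, hx⟩ => hxW (hTW ⟨hxT, hx⟩)
  obtain ⟨V, hV⟩ :=
    ProfiniteGrp.exist_openNormalSubgroup_sub_open_nhds_of_one hC.isClosed.isOpen_compl h1C
  refine ⟨V, V.isOpen, V.isNormal', fun x ⟨hxT, hxV⟩ => ?_⟩
  by_contra hxW
  exact hV hxV ⟨x, ⟨hxT, hxW⟩, rfl⟩

theorem exists_isCompact_isOpen_normal_sup_ker {H K : Type*} [Group H] [TopologicalSpace H]
    [IsTopologicalGroup H] [Group K] [TopologicalSpace K] [IsTopologicalGroup K] [CompactSpace K]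
    [TotallyDisconnectedSpace K] [T2Space K] (hH : CompactlyGeneratedGrp H) (φ : H →* K)
    (hφ : Continuous φ) (U : Subgroup H) (hUc : IsCompact (U : Set H)) (hUo : IsOpen (U : Set H)) :
    ∃ B : Subgroup H, IsCompact (B : Set H) ∧ IsOpen (B : Set H) ∧ (B ⊔ φ.ker).Normal := by
  obtain ⟨S, hSc, hS⟩ := hH
  let T : Set H := (fun p : H × H => p.1 * p.2 * p.1⁻¹) '' ((S ∪ S⁻¹) ×ˢ U)
  have hTc : IsCompact T := ((hSc.union hSc.inv).prod hUc).image (by fun_prop)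
  obtain ⟨V, hVo, hVn, hV⟩ := exists_openNormalSubgroup_inter_preimage_subset hφ hTc
    hUo.mul_right (W := (U : Set H) * φ.ker) fun x hx => ⟨1, U.one_mem, x, hx.2, one_mul x⟩
  let B : Subgroup H := V.comap φ ⊓ U
  have hBo : IsOpen (B : Set H) := (hVo.preimage hφ).inter hUo
  refine ⟨B, hUc.of_isClosed_subset (B.isClosed_of_isOpen hBo) inter_subset_right, hBo, ?_⟩
  have hconjB : ∀ s ∈ S ∪ S⁻¹, ∀ b ∈ B, s * b * s⁻¹ ∈ B ⊔ φ.ker := by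
    intro s hs b ⟨hbV, hbU⟩
    have hsbV : φ (s * b * s⁻¹) ∈ V := by simpa using hVn.conj_mem _ hbV (φ s)
    obtain ⟨u, hu, m, hm, hum⟩ := hV ⟨⟨(s, b), ⟨hs, hbU⟩, rfl⟩, hsbV⟩
    replace hum : u * m = s * b * s⁻¹ := hum
    have huV : φ u ∈ V := by simpa [← hum, φ.mem_ker.mp hm] using hsbV
    rw [← hum]
    exact Subgroup.mul_mem_sup ⟨huV, hu⟩ hm
  refine Subgroup.normal_of_conj_mem hS fun s hs x hx => ?_
  rw [← SetLike.mem_coe, Subgroup.mul_normal] at hx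
  obtain ⟨b, hb, m, hm, rfl⟩ := hx
  rw [show s * (b * m) * s⁻¹ = s * b * s⁻¹ * (s * m * s⁻¹) by group]
  exact mul_mem (hconjB s hs b hb) (Subgroup.mem_sup_right (φ.normal_ker.conj_mem m hm s))

theorem isProfiniteGrp_quotient_ker {G K : Type*} [Group G] [TopologicalSpace G] [Group K]
    [TopologicalSpace K] [TotallyDisconnectedSpace K] [T2Space K] (φ : G →* K)
    (hφ : Continuous φ) (B : Subgroup G) (hB : IsCompact (B : Set G)) (hBφ : B ⊔ φ.ker = ⊤) : IsProfiniteGrp (G ⧸ φ.ker) := by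
  have hlift : Continuous (QuotientGroup.kerLift φ) := continuous_quot_lift _ hφ
  have hinj : Function.Injective (QuotientGroup.kerLift φ) := QuotientGroup.kerLift_injective φ
  refine ⟨⟨?_⟩, (totallyDisconnectedSpace_iff _).mpr (isTotallyDisconnected_of_image
    hlift.continuousOn hinj (isTotallyDisconnected_of_totallyDisconnectedSpace _)),
    .of_injective_continuous hinj hlift⟩
  convert hB.image (QuotientGroup.continuous_mk (N := φ.ker))
  refine (eq_univ_of_forall fun q => ?_).symm
  obtain ⟨x, rfl⟩ := QuotientGroup.mk_surjective q
  have hx : x ∈ (B : Set G) * φ.ker := by simp [← Subgroup.mul_normal, hBφ]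
  obtain ⟨b, hb, m, hm, rfl⟩ := hx
  exact ⟨b, hb, by simpa using hm⟩

theorem IsEStar.of_sup_ker_eq_top {G K : Type u} [Group G] [TopologicalSpace G]
    [IsTopologicalGroup G] [LocallyCompactSpace G] [TotallyDisconnectedSpace G] [T2Space G]
    [Group K] [TopologicalSpace K] [TotallyDisconnectedSpace K] [T2Space K] (φ : G →* K)
    (hφ : Continuous φ) (hker : IsEStarHereditary φ.ker) (B : Subgroup G)
    (hB : IsCompact (B : Set G)) (hBφ : B ⊔ φ.ker = ⊤) : IsEStar G := by
  have hclosed : IsClosed (φ.ker : Set G) := isClosed_singleton.preimage hφ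
  have := hclosed.locallyCompactSpace
  exact IsEStar.extension G φ.ker hclosed hker.isEStar
    (Or.inl (isProfiniteGrp_quotient_ker φ hφ B hB hBφ))

theorem IsEStar.of_compactlyGeneratedGrp_of_continuous {H K : Type u} [Group H]
    [TopologicalSpace H] [IsTopologicalGroup H] [LocallyCompactSpace H]
    [TotallyDisconnectedSpace H] [T2Space H] [Group K] [TopologicalSpace K] [IsTopologicalGroup K]
    (hH : CompactlyGeneratedGrp H) (hK : IsProfiniteGrp K) (φ : H →* K) (hφ : Continuous φ)
    (hker : IsEStarHereditary φ.ker) : IsEStar H := by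
  obtain ⟨_, _, _⟩ := hK
  obtain ⟨U, hUc, hUo⟩ := exists_isCompact_isOpen_subgroup H
  obtain ⟨B, hBc, hBo, hBn⟩ := exists_isCompact_isOpen_normal_sup_ker hH φ hφ U hUc hUo
  let P := B ⊔ φ.ker
  have hPo : IsOpen (P : Set H) := Subgroup.isOpen_mono le_sup_left hBo
  have := hPo.locallyCompactSpace
  refine IsEStar.of_isOpen_normal P hPo (IsEStar.of_sup_ker_eq_top (φ.comp P.subtype)
    (hφ.comp continuous_subtype_val) (hker.ker_comp _ continuous_subtype_val
    Subtype.val_injective) (B.subgroupOf P)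
    ((P.isClosed_of_isOpen hPo).isClosedEmbedding_subtypeVal.isCompact_preimage hBc) ?_)
  rw [← MonoidHom.comap_ker, ← Subgroup.subgroupOf, ← Subgroup.subgroupOf_sup le_sup_left
    le_sup_right, Subgroup.subgroupOf_self]

theorem IsEStar.of_continuous_of_isProfiniteGrp {H K : Type u} [Group H] [TopologicalSpace H]
    [IsTopologicalGroup H] [LocallyCompactSpace H] [TotallyDisconnectedSpace H] [T2Space H]
    [Group K] [TopologicalSpace K] [IsTopologicalGroup K] (hK : IsProfiniteGrp K) (φ : H →* K)
    (hφ : Continuous φ) (hker : IsEStarHereditary φ.ker) : IsEStar H :=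
  IsEStar.of_forall_compactlyGeneratedGrp H fun O hO hOcg =>
    haveI := hO.locallyCompactSpace
    IsEStar.of_compactlyGeneratedGrp_of_continuous hOcg hK (φ.comp O.subtype)
      (hφ.comp continuous_subtype_val) (hker.ker_comp _ continuous_subtype_val
        Subtype.val_injective)

theorem IsEStar.isEStarHereditary {G : Type u} [Group G] [TopologicalSpace G] (hG : IsEStar G) :
    IsEStarHereditary G := by
  induction hG with
  | profinite G hG =>
    intro H _ _ _ _ _ _ ψ hψ hinj
    have : Subsingleton ψ.ker := (ψ.ker_eq_bot_iff.mpr hinj) ▸ inferInstance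
    exact IsEStar.of_continuous_of_isProfiniteGrp hG ψ hψ .of_subsingleton
  | discrete G =>
    intro H _ _ _ _ _ _ ψ hψ hinj
    have := DiscreteTopology.of_continuous_injective hψ hinj
    exact IsEStar.discrete H
  | extension G N _ _ hQ ih =>
    intro H _ _ _ _ _ _ ψ hψ hinj
    rcases hQ with hQ | hQ
    · refine IsEStar.of_continuous_of_isProfiniteGrp hQ ((QuotientGroup.mk' N).comp ψ)
        (QuotientGroup.continuous_mk.comp hψ) ?_
      rw [← MonoidHom.comap_ker, QuotientGroup.ker_mk']
      exact ih.comap ψ hψ hinj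
    · have hM : IsOpen (N.comap ψ : Set H) :=
        (QuotientGroup.discreteTopology_iff.mp hQ).preimage hψ
      have := hM.locallyCompactSpace
      exact IsEStar.of_isOpen_normal _ hM (ih.comap ψ hψ hinj).isEStar
  | directedUnion G O hdir hopen _ hcover ih =>
    intro H _ _ _ _ _ _ ψ hψ hinj
    have hopen' (i) : IsOpen ((O i).comap ψ : Set H) := (hopen i).preimage hψ
    refine IsEStar.directedUnion H (fun i => (O i).comap ψ)
      (hdir.mono_comp (· ≤ ·) fun _ _ => Subgroup.comap_mono) hopen' (fun i => ?_)
      (fun g => hcover (ψ g))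
    have := (hopen' i).locallyCompactSpace
    exact (ih i |>.comap ψ hψ hinj).isEStar

theorem IsEStar.of_continuous_injective_general (G : Type u) [Group G] [TopologicalSpace G]
    (H : Type u) [Group H] [TopologicalSpace H] [IsTopologicalGroup H]
    [LocallyCompactSpace H] [TotallyDisconnectedSpace H] [T2Space H]
    (hG : IsEStar G) (ψ : H →* G) (hcont : Continuous ψ)
    (hinj : Function.Injective ψ) :
    IsEStar H :=
  hG.isEStarHereditary H ψ hcont hinj

/-- `E*` is closed under continuous injective preimages: if `ψ : H → G` is a continuous
injective homomorphism of t.d.l.c. Hausdorff groups and `G ∈ E*`, then `H ∈ E*`. -/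
theorem IsEStar.of_continuous_injective (G : Type u) [Group G] [TopologicalSpace G]
    [IsTopologicalGroup G] [LocallyCompactSpace G] [TotallyDisconnectedSpace G] [T2Space G]
    (H : Type u) [Group H] [TopologicalSpace H] [IsTopologicalGroup H]
    [LocallyCompactSpace H] [TotallyDisconnectedSpace H] [T2Space H]
    (hG : IsEStar G) (ψ : H →* G) (hcont : Continuous ψ)
    (hinj : Function.Injective ψ) :
    IsEStar H :=
  IsEStar.of_continuous_injective_general G H hG ψ hcont hinj
end

section
/- Let G ∈ E* be σ-compact and let K ⊴ G be a compact normal subgroup such that G/K is second countable. Then G/K belongs to the class E of elementary groups. -/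
universe u

/-- The class `E` of elementary groups: the smallest class of t.d.l.c. second countable
groups containing second countable profinite groups and countable discrete groups, closed
under extensions with profinite or discrete quotient, and closed under countable increasing
unions of open subgroups. -/
inductive IsElementary : ∀ (G : Type u) [Group G] [TopologicalSpace G], Prop
  | profinite (G : Type u) [Group G] [TopologicalSpace G] [IsTopologicalGroup G]
      [SecondCountableTopology G] (h : IsProfiniteGrp G) : IsElementary G
  | discrete (G : Type u) [Group G] [TopologicalSpace G] [IsTopologicalGroup G]
      [DiscreteTopology G] [Countable G] : IsElementary G
  | extension (G : Type u) [Group G] [TopologicalSpace G] [IsTopologicalGroup G]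
      [LocallyCompactSpace G] [TotallyDisconnectedSpace G] [T2Space G]
      [SecondCountableTopology G]
      (N : Subgroup G) [N.Normal] (hN : IsClosed (N : Set G))
      (hNE : IsElementary N)
      (hQ : IsProfiniteGrp (G ⧸ N) ∨ DiscreteTopology (G ⧸ N)) : IsElementary G
  | union (G : Type u) [Group G] [TopologicalSpace G] [IsTopologicalGroup G]
      [LocallyCompactSpace G] [TotallyDisconnectedSpace G] [T2Space G]
      [SecondCountableTopology G]
      (O : ℕ → Subgroup G) (hmono : Monotone O)
      (hopen : ∀ n, IsOpen (O n : Set G))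
      (hmem : ∀ n, IsElementary (O n))
      (hcover : ∀ g : G, ∃ n, g ∈ O n) : IsElementary G

/-!
Induct on the construction of `G ∈ E*`, proving more generally that every second countable
image `H` of `G` under an open quotient homomorphism `φ` with compact kernel is elementary.
Images of profinite groups are profinite, and second countable images of discrete groups are
countable and discrete. For an extension `N ⊴ G`, the image `φ(N)` is closed because
`φ⁻¹(φ(N)) = N · ker φ`, the restriction `N → φ(N)` is open by the open mapping theorem for
σ-compact groups, and `H ⧸ φ(N)` is an image of `G ⧸ N`. For a directed union of open
subgroups, σ-compactness yields an increasing sequence of them that still covers `G`.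
Each such `H` is totally disconnected: for `g ∉ ker φ`, a clopen `C ⊇ ker φ` of `G` missing `g`
gives the clopen neighbourhood `(φ '' Cᶜ)ᶜ` of `1` missing `φ g`.
-/

open Set Topology
open scoped Pointwise

theorem MonoidHom.preimage_image_eq_mul_ker {G H : Type*} [Group G] [Group H] (φ : G →* H)
    (s : Set G) : φ ⁻¹' (φ '' s) = s * (φ.ker : Set G) := by
  ext g
  constructor
  · rintro ⟨x, hx, hxg⟩
    exact ⟨x, hx, x⁻¹ * g, by simp [MonoidHom.mem_ker, hxg], mul_inv_cancel_left x g⟩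
  · rintro ⟨x, hx, k, hk, rfl⟩
    exact ⟨x, hx, by simp [(MonoidHom.mem_ker).mp hk]⟩

theorem exists_isClopen_of_isCompact_subset_isOpen {X : Type*} [TopologicalSpace X]
    [LocallyCompactSpace X] [T2Space X] [TotallyDisconnectedSpace X] {K U : Set X}
    (hK : IsCompact K) (hU : IsOpen U) (hKU : K ⊆ U) :
    ∃ C, IsClopen C ∧ K ⊆ C ∧ C ⊆ U := by
  choose V hV using fun x : K ↦
    loc_compact_Haus_tot_disc_of_zero_dim.exists_subset_of_mem_open (hKU x.2) hU
  obtain ⟨I, hI⟩ := hK.elim_finite_subcover V (fun x ↦ (hV x).1.isOpen)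
    fun x hx ↦ mem_iUnion.2 ⟨⟨x, hx⟩, (hV _).2.1⟩
  exact ⟨⋃ i ∈ I, V i, I.finite_toSet.isClopen_biUnion fun i _ ↦ (hV i).1, hI,
    iUnion₂_subset fun i _ ↦ (hV i).2.2⟩

theorem Directed.exists_monotone_seq_ge {ι α : Type*} [Preorder α] {f : ι → α}
    (hf : Directed (· ≤ ·) f) (a : ℕ → ι) :
    ∃ j : ℕ → ι, Monotone (f ∘ j) ∧ ∀ n, f (a n) ≤ f (j n) := by
  choose c hc hc' using hf
  let j : ℕ → ι := fun n ↦ Nat.rec (a 0) (fun n i ↦ c i (a (n + 1))) n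
  refine ⟨j, monotone_nat_of_le_succ fun n ↦ hc (j n) (a (n + 1)), ?_⟩
  rintro (_ | n)
  · exact le_rfl
  · exact hc' _ _

namespace MonoidHom

variable {G H : Type*} [Group G] [Group H] [TopologicalSpace G] {φ : G →* H}

theorem isCompact_ker_subgroupMap (hker : IsCompact (φ.ker : Set G)) {A : Subgroup G}
    (hA : IsClosed (A : Set G)) : IsCompact ((φ.subgroupMap A).ker : Set A) := by
  rw [Subgroup.ker_subgroupMap, Subgroup.coe_subgroupOf]
  exact hA.isClosedEmbedding_subtypeVal.isCompact_preimage hker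

variable [TopologicalSpace H]

theorem t2Space_of_isQuotientMap [IsTopologicalGroup H] (hφ : IsQuotientMap φ)
    (hker : IsClosed (φ.ker : Set G)) : T2Space H := by
  rw [IsTopologicalGroup.t2Space_iff_one_closed, ← hφ.isClosed_preimage]
  exact hker

theorem discreteTopology_of_isOpenMap [IsTopologicalGroup H] [DiscreteTopology G]
    (hφ : IsOpenMap φ) : DiscreteTopology H :=
  discreteTopology_of_isOpen_singleton_one (by simpa using hφ {1} (isOpen_discrete _))

theorem totallyDisconnectedSpace_of_isOpenQuotientMap [IsTopologicalGroup G]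
    [IsTopologicalGroup H] [LocallyCompactSpace G] [T2Space G] [TotallyDisconnectedSpace G]
    (hφ : IsOpenQuotientMap φ) (hker : IsCompact (φ.ker : Set G)) :
    TotallyDisconnectedSpace H := by
  rw [totallyDisconnectedSpace_iff_connectedComponent_one, eq_singleton_iff_unique_mem]
  refine ⟨mem_connectedComponent, fun y hy ↦ ?_⟩
  obtain ⟨g, rfl⟩ := hφ.surjective y
  by_contra hg
  obtain ⟨C, hC, hkerC, hCg⟩ := exists_isClopen_of_isCompact_subset_isOpen hker
    isOpen_compl_singleton fun x hx hxg ↦ hg (by rwa [← show x = g from hxg])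
  have hS : IsClopen (φ '' Cᶜ)ᶜ := by
    refine IsClopen.compl ⟨?_, hφ.isOpenMap _ hC.isClosed.isOpen_compl⟩
    rw [← hφ.isQuotientMap.isClosed_preimage, preimage_image_eq_mul_ker]
    exact hC.isOpen.isClosed_compl.mul_right_of_isCompact hker
  have h1S : (1 : H) ∈ (φ '' Cᶜ)ᶜ := fun ⟨x, hxC, hx⟩ ↦ hxC (hkerC hx)
  exact hS.connectedComponent_subset h1S hy ⟨g, fun hgC ↦ hCg hgC rfl, rfl⟩

theorem isProfiniteGrp_of_isOpenQuotientMap [IsTopologicalGroup G] [IsTopologicalGroup H]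
    (hG : IsProfiniteGrp G) (hφ : IsOpenQuotientMap φ)
    (hker : IsClosed (φ.ker : Set G)) : IsProfiniteGrp H := by
  obtain ⟨_, _, _⟩ := hG
  exact ⟨hφ.surjective.compactSpace hφ.continuous,
    totallyDisconnectedSpace_of_isOpenQuotientMap hφ hker.isCompact,
    t2Space_of_isQuotientMap hφ.isQuotientMap hker⟩

theorem isClosed_map_of_isCompact_ker [IsTopologicalGroup G] (hφ : IsQuotientMap φ)
    (hker : IsCompact (φ.ker : Set G)) {A : Subgroup G} (hA : IsClosed (A : Set G)) :
    IsClosed (A.map φ : Set H) := by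
  rw [← hφ.isClosed_preimage, Subgroup.coe_map, preimage_image_eq_mul_ker]
  exact hA.mul_right_of_isCompact hker

theorem isOpenQuotientMap_subgroupMap [IsTopologicalGroup G] [IsTopologicalGroup H]
    [LocallyCompactSpace G] [SigmaCompactSpace G] [T2Space H]
    (hφ : IsOpenQuotientMap φ) (hker : IsCompact (φ.ker : Set G)) {A : Subgroup G}
    (hA : IsClosed (A : Set G)) : IsOpenQuotientMap (φ.subgroupMap A) := by
  have : LocallyCompactSpace H := hφ.locallyCompactSpace
  have : LocallyCompactSpace (A.map φ) :=
    (isClosed_map_of_isCompact_ker hφ.isQuotientMap hker hA).locallyCompactSpace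
  have : SigmaCompactSpace A := hA.sigmaCompactSpace
  have hc : Continuous (φ.subgroupMap A) :=
    (hφ.continuous.comp continuous_subtype_val).subtype_mk _
  exact ⟨φ.subgroupMap_surjective A, hc,
    (φ.subgroupMap A).isOpenMap_of_sigmaCompact (φ.subgroupMap_surjective A) hc⟩

end MonoidHom

theorem QuotientGroup.isOpenQuotientMap_map {G H : Type*} [Group G] [TopologicalSpace G]
    [IsTopologicalGroup G] [Group H] [TopologicalSpace H] [IsTopologicalGroup H]
    {N : Subgroup G} [N.Normal] {M : Subgroup H} [M.Normal] {φ : G →* H}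
    (hφ : IsOpenQuotientMap φ) (hNM : N ≤ M.comap φ) :
    IsOpenQuotientMap (QuotientGroup.map N M φ hNM) :=
  isOpenQuotientMap_mk.of_comp_iff.mp (isOpenQuotientMap_mk.comp hφ)

theorem IsEStar.isElementary_of_isOpenQuotientMap {G : Type u} [Group G] [TopologicalSpace G]
    (hG : IsEStar G) [IsTopologicalGroup G] [hlc : LocallyCompactSpace G] [ht2 : T2Space G]
    [htd : TotallyDisconnectedSpace G] [hsc : SigmaCompactSpace G] {H : Type u} [Group H]
    [TopologicalSpace H] [IsTopologicalGroup H] [SecondCountableTopology H] {φ : G →* H}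
    (hφ : IsOpenQuotientMap φ) (hker : IsCompact (φ.ker : Set G)) : IsElementary H := by
  induction hG generalizing H hlc ht2 htd hsc with
  | profinite G hprof =>
    exact .profinite H (φ.isProfiniteGrp_of_isOpenQuotientMap hprof hφ hker.isClosed)
  | discrete G =>
    have := φ.discreteTopology_of_isOpenMap hφ.isOpenMap
    have : Countable H := TopologicalSpace.separableSpace_iff_countable.mp inferInstance
    exact .discrete H
  | extension G N hN _ hQ ih =>
    have : T2Space H := φ.t2Space_of_isQuotientMap hφ.isQuotientMap hker.isClosed
    have : LocallyCompactSpace H := hφ.locallyCompactSpace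
    have : TotallyDisconnectedSpace H := φ.totallyDisconnectedSpace_of_isOpenQuotientMap hφ hker
    have : LocallyCompactSpace N := hN.locallyCompactSpace
    have : SigmaCompactSpace N := hN.sigmaCompactSpace
    have : (N.map φ).Normal := ‹N.Normal›.map φ hφ.surjective
    have : SecondCountableTopology (N.map φ) := IsEmbedding.subtypeVal.secondCountableTopology
    have hM : IsClosed (N.map φ : Set H) :=
      φ.isClosed_map_of_isCompact_ker hφ.isQuotientMap hker hN
    have hρ := QuotientGroup.isOpenQuotientMap_map hφ (Subgroup.le_comap_map φ N)
    have hρker : IsClosed ((QuotientGroup.map _ _ φ (Subgroup.le_comap_map φ N)).ker :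
        Set (G ⧸ N)) :=
      have : T1Space (H ⧸ N.map φ) := QuotientGroup.t1Space_iff.mpr hM
      isClosed_singleton.preimage hρ.continuous
    refine .extension H (N.map φ) hM (ih (φ.isOpenQuotientMap_subgroupMap hφ hker hN)
      (φ.isCompact_ker_subgroupMap hker hN)) ?_
    exact hQ.imp (fun hprof ↦ MonoidHom.isProfiniteGrp_of_isOpenQuotientMap hprof hρ hρker)
      fun (_ : DiscreteTopology (G ⧸ N)) ↦ MonoidHom.discreteTopology_of_isOpenMap hρ.isOpenMap
  | directedUnion G O hdir hopen _ hcover ih =>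
    have : T2Space H := φ.t2Space_of_isQuotientMap hφ.isQuotientMap hker.isClosed
    have : LocallyCompactSpace H := hφ.locallyCompactSpace
    have : TotallyDisconnectedSpace H := φ.totallyDisconnectedSpace_of_isOpenQuotientMap hφ hker
    have : Nonempty _ := ⟨(hcover 1).choose⟩
    choose a ha using fun n ↦ (isCompact_compactCovering G n).elim_directed_cover
      (fun i ↦ (O i : Set G)) hopen (fun g _ ↦ mem_iUnion.2 (hcover g))
      (hdir.mono_comp _ fun _ _ ↦ id)
    obtain ⟨j, hj, haj⟩ := hdir.exists_monotone_seq_ge a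
    have hOcl (n : ℕ) : IsClosed (O (j n) : Set G) := (O (j n)).isClosed_of_isOpen (hopen _)
    refine .union H (fun n ↦ (O (j n)).map φ) (fun m n hmn ↦ Subgroup.map_mono (hj hmn))
      (fun n ↦ hφ.isOpenMap _ (hopen _)) (fun n ↦ ?_) fun h ↦ ?_
    · have : SecondCountableTopology ((O (j n)).map φ) :=
        IsEmbedding.subtypeVal.secondCountableTopology
      have : LocallyCompactSpace (O (j n)) := (hOcl n).locallyCompactSpace
      have : SigmaCompactSpace (O (j n)) := (hOcl n).sigmaCompactSpace
      exact ih (j n) (φ.isOpenQuotientMap_subgroupMap hφ hker (hOcl n))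
        (φ.isCompact_ker_subgroupMap hker (hOcl n))
    · obtain ⟨g, rfl⟩ := hφ.surjective h
      obtain ⟨n, hn⟩ := exists_mem_compactCovering g
      exact ⟨n, g, haj n (ha n hn), rfl⟩

theorem quotient_isElementary_of_isEStar_general (G : Type u) [Group G] [TopologicalSpace G]
    [IsTopologicalGroup G] [LocallyCompactSpace G] [TotallyDisconnectedSpace G] [T2Space G]
    [SigmaCompactSpace G] (hG : IsEStar G)
    (K : Subgroup G) [K.Normal] (hK : IsCompact (K : Set G))
    [SecondCountableTopology (G ⧸ K)] :
    IsElementary (G ⧸ K) :=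
  hG.isElementary_of_isOpenQuotientMap (φ := QuotientGroup.mk' K)
    QuotientGroup.isOpenQuotientMap_mk (by rwa [QuotientGroup.ker_mk'])

/-- If `G ∈ E*` is σ-compact and `K ⊴ G` is a compact normal subgroup with `G/K` second
countable, then `G/K` is an elementary group. -/
theorem quotient_isElementary_of_isEStar (G : Type u) [Group G] [TopologicalSpace G]
    [IsTopologicalGroup G] [LocallyCompactSpace G] [TotallyDisconnectedSpace G] [T2Space G]
    [SigmaCompactSpace G] (hG : IsEStar G)
    (K : Subgroup G) [K.Normal] (hKcl : IsClosed (K : Set G)) (hK : IsCompact (K : Set G))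
    [SecondCountableTopology (G ⧸ K)] :
    IsElementary (G ⧸ K) :=
  quotient_isElementary_of_isEStar_general G hG K hK
end

section
/- In any locally compact Hausdorff group G, if N ⊴ G is closed, then the identity component of G/N equals the image of the closure of NG° in G/N; equivalently, (G/N)° = cl(NG°)/N. -/
/-
`G/G°` is a locally compact totally disconnected group, so every neighbourhood of its identity
contains an open subgroup (van Dantzig). Hence a closed normal subgroup `H ≥ G°` of `G` is
separated from each point outside it by an open subgroup containing `H`. Take `H = cl(NG°)`:
the image in `G/N` of an open subgroup containing `H` is an open, hence clopen, subgroup, so it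
contains `(G/N)°`; conversely, the preimage of `(G/N)°` is a closed subgroup containing `N` and
`G°`, hence `H`.
-/

universe u

/-- The identity component is a normal subgroup. -/
instance connectedComponentOfOne_normal (G : Type u) [Group G] [TopologicalSpace G]
    [IsTopologicalGroup G] : (Subgroup.connectedComponentOfOne G).Normal := by
  constructor
  intro n hn g
  have hc : Continuous fun x : G => g * x * g⁻¹ :=
    (continuous_mul_right g⁻¹).comp (continuous_mul_left g)
  have hsub := hc.image_connectedComponent_subset (1 : G)
  have h1 : g * (1 : G) * g⁻¹ = 1 := by simp
  rw [h1] at hsub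
  exact hsub ⟨n, hn, rfl⟩

open Set Filter Topology
open scoped Pointwise

section

variable {G : Type*} [Group G] [TopologicalSpace G] [IsTopologicalGroup G]

namespace OpenSubgroup

theorem exists_subset_of_isCompact_isOpen {W : Set G} (hWc : IsCompact W) (hWo : IsOpen W)
    (hW1 : (1 : G) ∈ W) : ∃ V : OpenSubgroup G, (V : Set G) ⊆ W := by
  obtain ⟨T, hT, hWT⟩ := compact_open_separated_mul_right hWc hWo subset_rfl
  set S := T ∩ T⁻¹
  have hS : S ∈ 𝓝 (1 : G) := inter_mem hT (inv_mem_nhds_one G hT)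
  have hstable : ∀ x ∈ Subgroup.closure S, ∀ w ∈ W, w * x ∈ W := by
    intro x hx
    induction hx using Subgroup.closure_induction'' with
    | mem x hx => exact fun w hw ↦ hWT (mul_mem_mul hw hx.1)
    | inv_mem x hx => exact fun w hw ↦ hWT (mul_mem_mul hw hx.2)
    | one => simp
    | mul x y _ _ hx hy => exact fun w hw ↦ mul_assoc w x y ▸ hy _ (hx w hw)
  refine ⟨⟨Subgroup.closure S, (Subgroup.closure S).isOpen_of_mem_nhds
    (mem_of_superset hS Subgroup.subset_closure)⟩, fun x hx ↦ ?_⟩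
  simpa using hstable x hx 1 hW1

theorem exists_subset_of_mem_nhds_one [LocallyCompactSpace G] [T2Space G]
    [TotallyDisconnectedSpace G] {U : Set G} (hU : U ∈ 𝓝 (1 : G)) :
    ∃ V : OpenSubgroup G, (V : Set G) ⊆ U := by
  obtain ⟨K, hKc, hK1, hKU⟩ :=
    exists_compact_subset isOpen_interior (mem_interior_iff_mem_nhds.2 hU)
  obtain ⟨W, hW, hW1, hWK⟩ :=
    loc_compact_Haus_tot_disc_of_zero_dim.exists_subset_of_mem_open hK1 isOpen_interior
  obtain ⟨V, hVW⟩ := exists_subset_of_isCompact_isOpen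
    (hKc.of_isClosed_subset hW.isClosed (hWK.trans interior_subset)) hW.isOpen hW1
  exact ⟨V, hVW.trans (hWK.trans (interior_subset.trans (hKU.trans interior_subset)))⟩

end OpenSubgroup

namespace Subgroup

theorem connectedComponentOfOne_le_of_isOpen {V : Subgroup G} (hV : IsOpen (V : Set G)) :
    connectedComponentOfOne G ≤ V :=
  fun _ hx ↦ IsClopen.connectedComponent_subset ⟨V.isClosed_of_isOpen hV, hV⟩ V.one_mem hx

theorem map_connectedComponentOfOne_le {Q : Type*} [Group Q] [TopologicalSpace Q]
    [IsTopologicalGroup Q] {f : G →* Q} (hf : Continuous f) :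
    (connectedComponentOfOne G).map f ≤ connectedComponentOfOne Q := by
  rintro _ ⟨x, hx, rfl⟩
  have h := hf.image_connectedComponent_subset 1 (mem_image_of_mem f hx)
  rwa [map_one] at h

theorem preimage_mk_connectedComponentOfOne (g : G) :
    (QuotientGroup.mk : G → G ⧸ connectedComponentOfOne G) ⁻¹' {(g : G ⧸ _)} =
      connectedComponent g := by
  ext z
  rw [← mul_one g, ← smul_connectedComponent, mul_one, mem_preimage, mem_singleton_iff,
    eq_comm, QuotientGroup.eq, mem_smul_set_iff_inv_smul_mem, smul_eq_mul]
  rfl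

instance totallyDisconnectedSpace_quotient_connectedComponentOfOne :
    TotallyDisconnectedSpace (G ⧸ connectedComponentOfOne G) := by
  rw [totallyDisconnectedSpace_iff_connectedComponent_one, ← QuotientGroup.mk_one,
    ← (QuotientGroup.isQuotientMap_mk _).isCoinducing.image_connectedComponent,
    ← preimage_mk_connectedComponentOfOne, image_preimage_eq _ QuotientGroup.mk_surjective]
  rintro y
  obtain ⟨g, rfl⟩ := QuotientGroup.mk_surjective y
  rw [preimage_mk_connectedComponentOfOne]
  exact isConnected_connectedComponent

theorem exists_openSubgroup_separating_of_totallyDisconnected [LocallyCompactSpace G]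
    [T2Space G] [TotallyDisconnectedSpace G] (H : Subgroup G) [H.Normal]
    (hH : IsClosed (H : Set G)) {g : G} (hg : g ∉ H) :
    ∃ U : OpenSubgroup G, H ≤ U ∧ g ∉ U := by
  have hΩ : (g * ·) ⁻¹' (H : Set G)ᶜ ∈ 𝓝 (1 : G) :=
    hH.isOpen_compl.preimage (continuous_const_mul g) |>.mem_nhds (by simpa using hg)
  obtain ⟨V, hVΩ⟩ := OpenSubgroup.exists_subset_of_mem_nhds_one hΩ
  refine ⟨⟨H ⊔ V, isOpen_mono le_sup_right V.isOpen⟩, le_sup_left, ?_⟩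
  change g ∉ H ⊔ (V : Subgroup G)
  rw [← SetLike.mem_coe, normal_mul]
  rintro ⟨h, hh, v, hv, rfl⟩
  exact hVΩ (V.inv_mem hv) (by simpa using hh)

theorem exists_openSubgroup_separating [LocallyCompactSpace G] (H : Subgroup G) [H.Normal]
    (hH : IsClosed (H : Set G)) (hCH : connectedComponentOfOne G ≤ H) {g : G} (hg : g ∉ H) :
    ∃ U : OpenSubgroup G, H ≤ U ∧ g ∉ U := by
  set π := QuotientGroup.mk' (connectedComponentOfOne G)
  have hπH : (H.map π).comap π = H := by
    rw [comap_map_eq, QuotientGroup.ker_mk', sup_eq_left.2 hCH]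
  have : (H.map π).Normal := Normal.map ‹_› π (QuotientGroup.mk'_surjective _)
  have : IsClosed (connectedComponentOfOne G : Set G) := isClosed_connectedComponent
  obtain ⟨U, hHU, hgU⟩ := exists_openSubgroup_separating_of_totallyDisconnected (H.map π)
    ((QuotientGroup.isQuotientMap_mk _).isClosed_preimage.1
      (by change IsClosed (π ⁻¹' _); rwa [← coe_comap, hπH]))
    (g := π g) (by rwa [← mem_comap, hπH])
  exact ⟨U.comap π continuous_quot_mk, map_le_iff_le_comap.1 hHU, hgU⟩

end Subgroup

end

open Subgroup

theorem connectedComponent_quotient_eq_general (G : Type u) [Group G] [TopologicalSpace G]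
    [IsTopologicalGroup G] [LocallyCompactSpace G]
    (N : Subgroup G) [N.Normal] :
    Subgroup.connectedComponentOfOne (G ⧸ N) =
      ((N ⊔ Subgroup.connectedComponentOfOne G).topologicalClosure).map
        (QuotientGroup.mk' N) := by
  set π := QuotientGroup.mk' N
  set H := (N ⊔ connectedComponentOfOne G).topologicalClosure
  have hNH : N ≤ H := le_sup_left.trans (le_topologicalClosure _)
  have hCH : connectedComponentOfOne G ≤ H := le_sup_right.trans (le_topologicalClosure _)
  have : H.Normal := is_normal_topologicalClosure _
  apply le_antisymm
  · intro x hx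
    obtain ⟨g, rfl⟩ := QuotientGroup.mk'_surjective N x
    by_contra hgH
    obtain ⟨U, hHU, hgU⟩ := H.exists_openSubgroup_separating (isClosed_topologicalClosure _) hCH
      (fun hg ↦ hgH (mem_map_of_mem π hg))
    have hgU' : π g ∈ U.toSubgroup.map π :=
      connectedComponentOfOne_le_of_isOpen (QuotientGroup.isOpenMap_coe _ U.isOpen) hx
    rw [← Subgroup.mem_comap, comap_map_eq, QuotientGroup.ker_mk',
      sup_eq_left.2 (hNH.trans hHU)] at hgU'
    exact hgU hgU'
  · have hN : N ≤ (connectedComponentOfOne (G ⧸ N)).comap π :=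
      (QuotientGroup.ker_mk' N).ge.trans (ker_le_comap π _)
    have hC : connectedComponentOfOne G ≤ (connectedComponentOfOne (G ⧸ N)).comap π :=
      map_le_iff_le_comap.1 (map_connectedComponentOfOne_le continuous_quot_mk)
    exact map_le_iff_le_comap.2 (topologicalClosure_minimal _ (sup_le hN hC)
      (isClosed_connectedComponent.preimage continuous_quot_mk))

/-- In a locally compact Hausdorff group `G`, for a closed normal subgroup `N` the
identity component of `G/N` is the image of the closure of `NG°`:
`(G/N)° = cl(NG°)/N`. -/
theorem connectedComponent_quotient_eq (G : Type u) [Group G] [TopologicalSpace G]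
    [IsTopologicalGroup G] [LocallyCompactSpace G] [T2Space G]
    (N : Subgroup G) [N.Normal] (hN : IsClosed (N : Set G)) :
    Subgroup.connectedComponentOfOne (G ⧸ N) =
      ((N ⊔ Subgroup.connectedComponentOfOne G).topologicalClosure).map
        (QuotientGroup.mk' N) :=
  connectedComponent_quotient_eq_general G N
end
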